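/- arXiv:1811.03891 — 4 statements merged into one kernel-verified Lean document; each statement's English description precedes it below -/
import Mathlib

section
/- Fix n ≥ 4, λ ≠ 0, a ∈ ℝ[x₁] of degree n−1, and g ∈ ℝ[t] with g(0) = 0. Define u_i = λx_i + H_i where H₁ = g(x₂ − a(x₁)), H_i = x_{i+1} + ((−1)^i/(i−1)!) a^{(i−1)}(x₁) g(x₂ − a(x₁))^{i−1} for 2 ≤ i ≤ n−1, and H_n = ((−1)^n/(n−1)!) a^{(n−1)}(x₁) g(x₂ − a(x₁))^{n−1}. Then Σ_{i=2}^{n} ((−1)^i / λ^{i−1}) u_i − a(u₁/λ) = x₂ − a(x₁). -/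
/-!
Writing `h = g(x₂ - a(x₁))`, the `i`-th summand splits as
`(-1)^i x_i / λ^(i-2) - (-1)^(i+1) x_(i+1) / λ^(i-1) + a^(i-1)(x₁) (h/λ)^(i-1) / (i-1)!`
(the signs `(-1)^i` square away in the last part). The first two parts telescope to `x₂`;
the last ones are the Taylor terms of `a(x₁ + h/λ) = a(u₁/λ)` except the constant term
`a(x₁)`, and that Taylor expansion is exact because `deg a < n`.
-/

open Polynomial Finset
open scoped Nat

theorem Polynomial.eval_add_eq_sum_range_iterate_derivative {K : Type*} [Field K] [CharZero K]
    (p : K[X]) {n : ℕ} (hn : p.natDegree < n) (x y : K) :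
    p.eval (x + y) = ∑ j ∈ range n, (derivative^[j] p).eval x * y ^ j / j ! := by
  rw [add_comm, ← taylor_eval, eval_eq_sum_range' (by rwa [natDegree_taylor])]
  refine sum_congr rfl fun j _ => ?_
  rw [taylor_coeff, ← factorial_smul_hasseDeriv, LinearMap.smul_apply, eval_smul, nsmul_eq_mul,
    mul_assoc, mul_div_cancel_left₀ _ (Nat.cast_ne_zero.2 j.factorial_ne_zero)]

theorem neg_one_pow_div_pow_mul_eq_sub_add {K : Type*} [Field K] {lam : K} (hlam : lam ≠ 0)
    (k : ℕ) (x y c h : K) :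
    (-1) ^ (k + 2) / lam ^ (k + 1) * (lam * x + (y + (-1) ^ (k + 2) / (k + 1)! * c * h ^ (k + 1)))
      = ((-1) ^ k * x / lam ^ k - (-1) ^ (k + 1) * y / lam ^ (k + 1))
        + c * (h / lam) ^ (k + 1) / (k + 1)! := by
  have hsq : ((-1 : K) ^ k) ^ 2 = 1 := by rw [← pow_mul, pow_mul', neg_one_sq, one_pow]
  rw [pow_add (-1 : K) k 2, pow_succ (-1 : K) k, div_pow, pow_succ lam k]
  field_simp
  linear_combination c * h ^ (k + 1) / (k + 1)! * hsq

theorem sum_neg_one_pow_div_pow_mul_sub_eval_add_div {K : Type*} [Field K] [CharZero K]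
    {lam : K} (hlam : lam ≠ 0) {a : K[X]} {m : ℕ} (ha : a.natDegree < m + 2) {x₁ h : K}
    {y u : ℕ → K} (hy : y (m + 3) = 0)
    (hu : ∀ k ≤ m, u (k + 2) = lam * y (k + 2) +
      (y (k + 3) + (-1) ^ (k + 2) / (k + 1)! * (derivative^[k + 1] a).eval x₁ * h ^ (k + 1))) :
    ∑ k ∈ range (m + 1), (-1) ^ (k + 2) / lam ^ (k + 1) * u (k + 2) - a.eval (x₁ + h / lam) =
      y 2 - a.eval x₁ := by
  set T : ℕ → K := fun j => (derivative^[j] a).eval x₁ * (h / lam) ^ j / (j ! : K)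
  have hterm : ∀ k ∈ range (m + 1), (-1) ^ (k + 2) / lam ^ (k + 1) * u (k + 2) =
      ((-1) ^ k * y (k + 2) / lam ^ k - (-1) ^ (k + 1) * y (k + 1 + 2) / lam ^ (k + 1)) +
        T (k + 1) := by
    intro k hk
    rw [hu k (Nat.lt_succ_iff.1 (mem_range.1 hk)), neg_one_pow_div_pow_mul_eq_sub_add hlam]
  have htaylor : a.eval (x₁ + h / lam) = ∑ j ∈ range (m + 2), T j :=
    a.eval_add_eq_sum_range_iterate_derivative ha _ _
  rw [sum_congr rfl hterm, sum_add_distrib, sum_range_sub' (fun k => (-1) ^ k * y (k + 2) / lam ^ k),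
    htaylor, sum_range_succ' T (m + 1)]
  have hT0 : T 0 = a.eval x₁ := by simp [T]
  rw [show y (m + 1 + 2) = 0 from hy, hT0]
  simp only [pow_zero, one_mul, div_one, mul_zero, zero_div]
  ring

theorem stmt10_general (n : ℕ) (hn : 4 ≤ n) (lam : ℝ) (hlam : lam ≠ 0)
    (a g : Polynomial ℝ) (ha : a.natDegree = n - 1)
    (x : ℕ → ℝ) (u : ℕ → ℝ)
    (hu : ∀ i, u i = lam * x i +
      (if i = 1 then g.eval (x 2 - a.eval (x 1))
       else if i = n then
         (-1 : ℝ)^n / (Nat.factorial (n-1)) *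
           ((Polynomial.derivative^[n-1] a).eval (x 1)) *
           (g.eval (x 2 - a.eval (x 1)))^(n-1)
       else x (i+1) + (-1 : ℝ)^i / (Nat.factorial (i-1)) *
           ((Polynomial.derivative^[i-1] a).eval (x 1)) *
           (g.eval (x 2 - a.eval (x 1)))^(i-1))) :
    (∑ i ∈ Finset.Icc 2 n, (-1 : ℝ)^i / lam^(i-1) * u i) - a.eval (u 1 / lam) =
      x 2 - a.eval (x 1) := by
  obtain ⟨m, rfl⟩ : ∃ m, n = m + 2 := ⟨n - 2, by omega⟩
  set h := g.eval (x 2 - a.eval (x 1))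
  -- padding `x` by zero beyond index `n` gives every `u i`, `2 ≤ i ≤ n`, the shape of the case `i < n`
  set y : ℕ → ℝ := fun i => if i ≤ m + 2 then x i else 0
  have hu1 : u 1 / lam = x 1 + h / lam := by
    rw [hu 1, if_pos rfl]; field_simp
  have hu' : ∀ k ≤ m, u (k + 2) = lam * y (k + 2) +
      (y (k + 3) + (-1) ^ (k + 2) / (k + 1)! * (derivative^[k + 1] a).eval (x 1) * h ^ (k + 1)) := by
    intro k hk
    rw [hu, if_neg (by omega)]
    rcases hk.lt_or_eq with hk | rfl
    · rw [if_neg (by omega), show k + 2 - 1 = k + 1 by omega]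
      simp only [y, if_pos (show k + 2 ≤ m + 2 by omega), if_pos (show k + 3 ≤ m + 2 by omega)]
    · rw [if_pos rfl, show k + 2 - 1 = k + 1 by omega]
      simp only [y, le_refl, if_true, if_neg (show ¬k + 3 ≤ k + 2 by omega), zero_add]
  have hsum := sum_neg_one_pow_div_pow_mul_sub_eval_add_div hlam (by omega) (if_neg (by omega)) hu'
  rw [← Ico_add_one_right_eq_Icc, sum_Ico_eq_sum_range, show m + 2 + 1 - 2 = m + 1 by omega, hu1]
  simpa [y, add_comm 2] using hsum

/-- the key identity
`∑_{i=2}^n ((−1)^i/λ^{i−1}) u_i − a(u₁/λ) = x₂ − a(x₁)` for van den Essen's map. -/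
theorem stmt10 (n : ℕ) (hn : 4 ≤ n) (lam : ℝ) (hlam : lam ≠ 0)
    (a g : Polynomial ℝ) (ha : a.natDegree = n - 1) (hg : g.eval 0 = 0)
    (x : ℕ → ℝ) (u : ℕ → ℝ)
    (hu : ∀ i, u i = lam * x i +
      (if i = 1 then g.eval (x 2 - a.eval (x 1))
       else if i = n then
         (-1 : ℝ)^n / (Nat.factorial (n-1)) *
           ((Polynomial.derivative^[n-1] a).eval (x 1)) *
           (g.eval (x 2 - a.eval (x 1)))^(n-1)
       else x (i+1) + (-1 : ℝ)^i / (Nat.factorial (i-1)) *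
           ((Polynomial.derivative^[i-1] a).eval (x 1)) *
           (g.eval (x 2 - a.eval (x 1)))^(i-1))) :
    (∑ i ∈ Finset.Icc 2 n, (-1 : ℝ)^i / lam^(i-1) * u i) - a.eval (u 1 / lam) =
      x 2 - a.eval (x 1) :=
  stmt10_general n hn lam hlam a g ha x u hu
end

section
/- With the notation of van den Essen's map (n ≥ 4, λ ≠ 0, a ∈ ℝ[x₁] of degree n−1, g ∈ ℝ[t], g(0)=0, F = λI + H as above), the map F : ℝⁿ → ℝⁿ is injective. -/
open Polynomial Finset in
private lemma taylorSumAux (a : Polynomial ℝ) (r t : ℝ) :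
    a.eval (r + t) = ∑ k ∈ Finset.range (a.natDegree + 1),
      (Polynomial.derivative^[k] a).eval r / (Nat.factorial k) * t ^ k := by
  have h := Polynomial.taylor_eval r a t
  rw [add_comm r t, ← h, Polynomial.eval_eq_sum_range, Polynomial.natDegree_taylor]
  refine Finset.sum_congr rfl fun k _ => ?_
  congr 1
  rw [Polynomial.taylor_coeff]
  have h2 := congrFun (Polynomial.factorial_smul_hasseDeriv (R := ℝ) k) a
  have h4 : (Nat.factorial k : ℝ) * (Polynomial.hasseDeriv k a).eval r
      = (Polynomial.derivative^[k] a).eval r := by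
    rw [← h2]; simp [mul_comm]
  have hk : (Nat.factorial k : ℝ) ≠ 0 := Nat.cast_ne_zero.mpr (Nat.factorial_ne_zero k)
  field_simp [← h4]
  rw [← h4]; ring

private lemma telescopeIco (E : ℕ → ℝ) (m : ℕ) : ∀ N : ℕ, m ≤ N →
    ∑ j ∈ Finset.Ico m N, (E j - E (j+1)) = E m - E N := by
  intro N
  induction N with
  | zero => intro h; simp [Nat.le_zero.mp h]
  | succ N ih =>
    intro h
    rcases Nat.eq_or_lt_of_le h with he | hlt
    · rw [he]; simp
    · have hm : m ≤ N := by omega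
      rw [Finset.sum_Ico_succ_top hm, ih hm]; ring

/-- van den Essen's map `F = λI + H` on `ℝⁿ` (`n ≥ 4`, `λ ≠ 0`) is
injective.  Coordinates are 0-based: component `i` corresponds to the paper's
`x_{i+1}`. -/
theorem stmt11 (n : ℕ) (hn : 4 ≤ n) (lam : ℝ) (hlam : lam ≠ 0)
    (a g : Polynomial ℝ) (ha : a.natDegree = n - 1) (hg : g.eval 0 = 0)
    (F : (Fin n → ℝ) → (Fin n → ℝ))
    (hF : ∀ x : Fin n → ℝ, ∀ i : Fin n, F x i =
      lam * x i +
      (if i.val = 0 then g.eval (x ⟨1, by omega⟩ - a.eval (x ⟨0, by omega⟩))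
       else if i.val = n - 1 then
         (-1 : ℝ)^n / (Nat.factorial (n-1)) *
           ((Polynomial.derivative^[n-1] a).eval (x ⟨0, by omega⟩)) *
           (g.eval (x ⟨1, by omega⟩ - a.eval (x ⟨0, by omega⟩)))^(n-1)
       else x ⟨(i.val+1) % n, Nat.mod_lt _ (by omega)⟩ +
         (-1 : ℝ)^(i.val+1) / (Nat.factorial i.val) *
           ((Polynomial.derivative^[i.val] a).eval (x ⟨0, by omega⟩)) *
           (g.eval (x ⟨1, by omega⟩ - a.eval (x ⟨0, by omega⟩)))^(i.val))) :
    Function.Injective F := by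
  have hn0 : 0 < n := by omega
  -- convenient forms of hF
  have hF0 : ∀ x : Fin n → ℝ, F x ⟨0, hn0⟩ = lam * x ⟨0, hn0⟩ +
      g.eval (x ⟨1, by omega⟩ - a.eval (x ⟨0, hn0⟩)) := by
    intro x; rw [hF]; simp
  have hFtop : ∀ x : Fin n → ℝ, F x ⟨n-1, by omega⟩ = lam * x ⟨n-1, by omega⟩ +
      (-1 : ℝ)^n / (Nat.factorial (n-1)) *
        ((Polynomial.derivative^[n-1] a).eval (x ⟨0, hn0⟩)) *
        (g.eval (x ⟨1, by omega⟩ - a.eval (x ⟨0, hn0⟩)))^(n-1) := by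
    intro x; rw [hF]
    rw [if_neg (show ¬(n-1 = 0) by omega), if_pos rfl]
  have hFmid : ∀ (x : Fin n → ℝ) (j : ℕ) (h1 : 1 ≤ j) (h2 : j < n - 1),
      F x ⟨j, by omega⟩ = lam * x ⟨j, by omega⟩ + (x ⟨j+1, by omega⟩ +
        (-1 : ℝ)^(j+1) / (Nat.factorial j) *
          ((Polynomial.derivative^[j] a).eval (x ⟨0, hn0⟩)) *
          (g.eval (x ⟨1, by omega⟩ - a.eval (x ⟨0, hn0⟩)))^j) := by
    intro x j h1 h2
    rw [hF]
    have hj0 : ¬ (j = 0) := by omega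
    have hjn : ¬ (j = n-1) := by omega
    rw [if_neg hj0, if_neg hjn]
    have hidx : (⟨(j+1) % n, Nat.mod_lt _ (by omega)⟩ : Fin n) = ⟨j+1, by omega⟩ :=
      Fin.ext (Nat.mod_eq_of_lt (by omega))
    rw [hidx]
  have hn' : n - 1 + 1 = n := by omega
  have key : ∀ x : Fin n → ℝ,
      (∑ j ∈ Finset.Ico 1 n, (-1:ℝ)^(j+1)/lam^j * F x ⟨j % n, Nat.mod_lt _ hn0⟩)
        = x ⟨1, by omega⟩ + a.eval (F x ⟨0, hn0⟩ / lam) - a.eval (x ⟨0, hn0⟩) := by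
    intro x
    set G : ℝ := g.eval (x ⟨1, (by omega : 1 < n)⟩ - a.eval (x ⟨0, hn0⟩)) with hGd
    set E : ℕ → ℝ := fun j => (-1:ℝ)^(j+1)/lam^j * (lam * x ⟨j % n, Nat.mod_lt _ hn0⟩)
      with hEd
    set T : ℕ → ℝ := fun j =>
      (Polynomial.derivative^[j] a).eval (x ⟨0, hn0⟩) / (Nat.factorial j) * (G/lam)^j
      with hTd
    have hu0 : F x ⟨0, hn0⟩ / lam = x ⟨0, hn0⟩ + G/lam := by
      rw [hF0]; field_simp; ring
    -- middle terms
    have hmid : ∀ j ∈ Finset.Ico 1 (n-1),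
        (-1:ℝ)^(j+1)/lam^j * F x ⟨j % n, Nat.mod_lt _ hn0⟩ = (E j - E (j+1)) + T j := by
      intro j hj
      rw [Finset.mem_Ico] at hj
      have hidx : (⟨j % n, Nat.mod_lt _ hn0⟩ : Fin n) = ⟨j, by omega⟩ :=
        Fin.ext (Nat.mod_eq_of_lt (by omega))
      have hidx2 : (⟨(j+1) % n, Nat.mod_lt _ hn0⟩ : Fin n) = ⟨j+1, by omega⟩ :=
        Fin.ext (Nat.mod_eq_of_lt (by omega))
      rw [hidx, hFmid x j hj.1 hj.2, hEd, hTd]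
      simp only [hidx, hidx2]
      have hl : (lam : ℝ)^j ≠ 0 := pow_ne_zero j hlam
      have hf : ((Nat.factorial j : ℝ)) ≠ 0 := Nat.cast_ne_zero.mpr (Nat.factorial_ne_zero j)
      rw [show ((-1:ℝ))^(j+1+1) = -((-1:ℝ)^(j+1)) by rw [pow_succ]; ring]
      rcases neg_one_pow_eq_or ℝ (j+1) with hs | hs <;> rw [hs] <;> simp only [div_pow] <;> field_simp <;> ring
    -- top term
    have htop : (-1:ℝ)^((n-1)+1)/lam^(n-1) * F x ⟨(n-1) % n, Nat.mod_lt _ hn0⟩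
        = E (n-1) + T (n-1) := by
      have hidx : (⟨(n-1) % n, Nat.mod_lt _ hn0⟩ : Fin n) = ⟨n-1, by omega⟩ :=
        Fin.ext (Nat.mod_eq_of_lt (by omega))
      rw [hidx, hFtop x, hEd, hTd]
      simp only [hidx]
      have hpow : ((-1:ℝ))^((n-1)+1) = (-1:ℝ)^n := by rw [hn']
      rw [hpow]
      have hl : (lam : ℝ)^(n-1) ≠ 0 := pow_ne_zero _ hlam
      have hf : ((Nat.factorial (n-1) : ℝ)) ≠ 0 :=
        Nat.cast_ne_zero.mpr (Nat.factorial_ne_zero _)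
      rcases neg_one_pow_eq_or ℝ n with hs | hs <;> rw [hs] <;> simp only [div_pow] <;> field_simp <;> ring
    -- split off the top term
    have hIco : Finset.Ico 1 n = Finset.Ico 1 ((n-1)+1) := by rw [hn']
    have hsplit := Finset.sum_Ico_succ_top (show 1 ≤ n-1 by omega)
      (fun j => (-1:ℝ)^(j+1)/lam^j * F x ⟨j % n, Nat.mod_lt _ hn0⟩)
    rw [hIco, hsplit, Finset.sum_congr rfl hmid, Finset.sum_add_distrib,
      telescopeIco E 1 (n-1) (by omega), htop]
    -- Taylor sum
    have htays : ∑ j ∈ Finset.Ico 1 n, T j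
        = a.eval (x ⟨0, hn0⟩ + G/lam) - a.eval (x ⟨0, hn0⟩) := by
      have h0 : ∑ j ∈ Finset.range n, T j = a.eval (x ⟨0, hn0⟩ + G/lam) := by
        have ht := taylorSumAux a (x ⟨0, hn0⟩) (G/lam)
        rw [ha, hn'] at ht
        rw [ht]
      have hbot : ∑ j ∈ Finset.range n, T j = T 0 + ∑ j ∈ Finset.Ico 1 n, T j := by
        rw [Finset.range_eq_Ico, Finset.sum_eq_sum_Ico_succ_bot (by omega : 0 < n) T]
      have hT0 : T 0 = a.eval (x ⟨0, hn0⟩) := by simp [hTd]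
      rw [← h0, hbot, hT0]; ring
    have hIco2 : Finset.Ico 1 ((n-1)+1) = Finset.Ico 1 n := by rw [hn']
    have htays' : ∑ j ∈ Finset.Ico 1 (n-1), T j + T (n-1)
        = a.eval (x ⟨0, hn0⟩ + G/lam) - a.eval (x ⟨0, hn0⟩) := by
      rw [← htays, ← hIco2, Finset.sum_Ico_succ_top (show 1 ≤ n-1 by omega) T]
    have hE1 : E 1 = x ⟨1, by omega⟩ := by
      have hidx : (⟨1 % n, Nat.mod_lt _ hn0⟩ : Fin n) = ⟨1, by omega⟩ :=
        Fin.ext (Nat.mod_eq_of_lt (by omega))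
      rw [hEd]; simp only [hidx]
      field_simp
      norm_num
    rw [hu0]
    have : E 1 - E (n-1) + (∑ j ∈ Finset.Ico 1 (n-1), T j) + (E (n-1) + T (n-1))
        = E 1 + ((∑ j ∈ Finset.Ico 1 (n-1), T j) + T (n-1)) := by ring
    rw [this, htays', hE1]
    ring
  intro x y hxy
  have hkx := key x
  have hky := key y
  rw [hxy] at hkx
  have hs : x ⟨1, by omega⟩ - a.eval (x ⟨0, hn0⟩)
      = y ⟨1, by omega⟩ - a.eval (y ⟨0, hn0⟩) := by linarith [hkx, hky]
  have hG : g.eval (x ⟨1, by omega⟩ - a.eval (x ⟨0, hn0⟩))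
      = g.eval (y ⟨1, by omega⟩ - a.eval (y ⟨0, hn0⟩)) := by rw [hs]
  have h0 : x ⟨0, hn0⟩ = y ⟨0, hn0⟩ := by
    have hx0 := hF0 x
    have hy0 := hF0 y
    rw [hxy] at hx0
    have : lam * x ⟨0, hn0⟩ = lam * y ⟨0, hn0⟩ := by linarith [hx0, hy0, hG]
    exact mul_left_cancel₀ hlam this
  have ha0 : a.eval (x ⟨0, hn0⟩) = a.eval (y ⟨0, hn0⟩) := by rw [h0]
  have h1 : x ⟨1, by omega⟩ = y ⟨1, by omega⟩ := by
    have h' := hs; rw [ha0] at h'; linarith [h']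
  have hA : ∀ j : ℕ, (Polynomial.derivative^[j] a).eval (x ⟨0, hn0⟩)
      = (Polynomial.derivative^[j] a).eval (y ⟨0, hn0⟩) := fun j => by rw [h0]
  have htopc : x ⟨n-1, by omega⟩ = y ⟨n-1, by omega⟩ := by
    have hx := hFtop x
    have hy := hFtop y
    rw [hxy] at hx
    rw [hs, hA] at hx
    have : lam * x ⟨n-1, by omega⟩ = lam * y ⟨n-1, by omega⟩ := by linarith [hx, hy]
    exact mul_left_cancel₀ hlam this
  have hrec : ∀ m : ℕ, m ≤ n - 2 → x ⟨n-1-m, by omega⟩ = y ⟨n-1-m, by omega⟩ := by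
    intro m
    induction m with
    | zero => intro _; exact htopc
    | succ m ih =>
      intro hm
      have hj1 : 1 ≤ n-1-(m+1) := by omega
      have hj2 : n-1-(m+1) < n-1 := by omega
      have hx := hFmid x (n-1-(m+1)) hj1 hj2
      have hy := hFmid y (n-1-(m+1)) hj1 hj2
      rw [hxy] at hx
      have hsucc : (⟨n-1-(m+1)+1, by omega⟩ : Fin n) = ⟨n-1-m, by omega⟩ :=
        Fin.ext (show n-1-(m+1)+1 = n-1-m by omega)
      rw [hsucc] at hx hy
      have hih := ih (by omega)
      rw [hs, hA, hih] at hx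
      have : lam * x ⟨n-1-(m+1), by omega⟩ = lam * y ⟨n-1-(m+1), by omega⟩ := by
        linarith [hx, hy]
      exact mul_left_cancel₀ hlam this
  funext i
  by_cases hi : i.val = 0
  · have hie : i = ⟨0, hn0⟩ := Fin.ext hi
    rw [hie]; exact h0
  · have hilt := i.isLt
    have hie : i = ⟨n-1-(n-1-i.val), by omega⟩ :=
      Fin.ext (show i.val = n-1-(n-1-i.val) by omega)
    rw [hie]
    exact hrec (n-1-i.val) (by omega)
end

section
/- Let F : ℝⁿ → ℝⁿ be differentiable and bijective with differentiable inverse G, and suppose JH := JF − I has linearly independent rows over ℝ at the level of functions (i.e., the only constant vector c with cᵀ JH(x) = 0 for all x is c = 0) and JH(x) is nilpotent for all x. Write G = X + H̄ and H̃ = λH̄(λ^{-1}X) appropriately; in the special case λ = 1: if cᵀ JH̄(y) = 0 for all y, with JH̄(y) = Σ_{i=1}^{d}(−1)^i N(G(y))^i and N = JH, then cᵀ N(x) = 0 for all x, hence c = 0. Thus the rows of JH̄ are linearly independent over ℝ. -/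
/-!
Write `ℓ = cᵀ`. If `ℓ ∘ JH̄ = 0` then `ℓ ∘ JG = ℓ`, and the chain rule `JG(F x) ∘ JF(x) = I`
turns this into `ℓ = ℓ ∘ JF(x) = ℓ + ℓ ∘ JH(x)`, so `ℓ ∘ JH = 0` and `c = 0` by the
independence of the rows of `JH`.
-/

open Function

section

variable {𝕜 E : Type*} [NontriviallyNormedField 𝕜] [NormedAddCommGroup E] [NormedSpace 𝕜 E]

theorem fderiv_comp_fderiv_of_leftInverse {E' : Type*} [NormedAddCommGroup E']
    [NormedSpace 𝕜 E'] {F : E → E'} {G : E' → E} (hGF : LeftInverse G F) {x : E}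
    (hF : DifferentiableAt 𝕜 F x) (hG : DifferentiableAt 𝕜 G (F x)) :
    (fderiv 𝕜 G (F x)).comp (fderiv 𝕜 F x) = ContinuousLinearMap.id 𝕜 E := by
  rw [← fderiv_comp x hG hF, hGF.comp_eq_id, fderiv_id]

theorem fderiv_id_add_apply {H : E → E} {x : E} (hH : DifferentiableAt 𝕜 H x) (v : E) :
    fderiv 𝕜 (fun x => x + H x) x v = v + fderiv 𝕜 H x v := by
  rw [fderiv_fun_add differentiableAt_fun_id hH, fderiv_fun_id]
  rfl

theorem map_fderiv_eq_zero_of_leftInverse_id_add {W : Type*} [AddCommGroup W] [Module 𝕜 W]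
    {H Hb : E → E} (hH : Differentiable 𝕜 H) (hHb : Differentiable 𝕜 Hb)
    (hinv : LeftInverse (fun y => y + Hb y) (fun x => x + H x)) (ℓ : E →ₗ[𝕜] W)
    (hℓ : ∀ y v, ℓ (fderiv 𝕜 Hb y v) = 0) (x v : E) : ℓ (fderiv 𝕜 H x v) = 0 := by
  set F : E → E := fun x => x + H x
  set G : E → E := fun y => y + Hb y
  have hFd : Differentiable 𝕜 F := differentiable_fun_id.add hH
  have hGd : Differentiable 𝕜 G := differentiable_fun_id.add hHb
  have hℓG : ∀ y u, ℓ (fderiv 𝕜 G y u) = ℓ u := fun y u => by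
    rw [fderiv_id_add_apply (hHb y), map_add, hℓ, add_zero]
  have hchain : fderiv 𝕜 G (F x) (fderiv 𝕜 F x v) = v :=
    ContinuousLinearMap.ext_iff.mp (fderiv_comp_fderiv_of_leftInverse hinv (hFd x) (hGd _)) v
  have h : ℓ v + ℓ (fderiv 𝕜 H x v) = ℓ v := by
    rw [← map_add, ← fderiv_id_add_apply (hH x), ← hℓG (F x), hchain]
  exact add_eq_left.mp h

end

theorem stmt18_general (n : ℕ) (H Hb : (Fin n → ℝ) → (Fin n → ℝ))
    (hH : Differentiable ℝ H) (hHb : Differentiable ℝ Hb)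
    (F G : (Fin n → ℝ) → (Fin n → ℝ))
    (hF : ∀ x, F x = x + H x) (hG : ∀ y, G y = y + Hb y)
    (hGF : Function.LeftInverse G F)
    (hIndep : ∀ c : Fin n → ℝ,
      (∀ x v, ∑ i, c i * fderiv ℝ H x v i = 0) → c = 0) :
    ∀ c : Fin n → ℝ, (∀ y v, ∑ i, c i * fderiv ℝ Hb y v i = 0) → c = 0 := by
  intro c hc
  obtain rfl : F = fun x => x + H x := funext hF
  obtain rfl : G = fun y => y + Hb y := funext hG
  exact hIndep c fun x v =>
    map_fderiv_eq_zero_of_leftInverse_id_add hH hHb hGF (dotProductBilin ℝ ℝ c) hc x v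

/-- if `F = X + H` is bijective with inverse `G = X + H̄`, `JH` everywhere
nilpotent of index `d+1`, and the rows of `JH` are linearly independent over `ℝ` (as
functions), then the rows of `JH̄` are linearly independent over `ℝ`. -/
theorem stmt18 (n d : ℕ) (H Hb : (Fin n → ℝ) → (Fin n → ℝ))
    (hH : Differentiable ℝ H) (hHb : Differentiable ℝ Hb)
    (F G : (Fin n → ℝ) → (Fin n → ℝ))
    (hF : ∀ x, F x = x + H x) (hG : ∀ y, G y = y + Hb y)
    (hGF : Function.LeftInverse G F) (hFG : Function.RightInverse G F)
    (hnil : ∀ x, (fderiv ℝ H x) ^ (d+1) = 0)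
    (hIndep : ∀ c : Fin n → ℝ,
      (∀ x v, ∑ i, c i * fderiv ℝ H x v i = 0) → c = 0) :
    ∀ c : Fin n → ℝ, (∀ y v, ∑ i, c i * fderiv ℝ Hb y v i = 0) → c = 0 :=
  stmt18_general n H Hb hH hHb F G hF hG hGF hIndep
end

section
/- Consider the vector field on ℝ³ (case n = 2 of the paper's family): F(x₁,x₂,x₃) = (−x₂, x₁, −x₃R(x₃)) + R(x₃)·(λx₁ + a₂f(a₁x₁+a₂x₂), λx₂ − a₁f(a₁x₁+a₂x₂), 0), where R(x) = Σ d_{2l}x^{2l} with d_{2l} > 0, λ < 0, a₁,a₂ ∈ ℝ, f odd polynomial with negative coefficients. Then the plane {x₃ = 0} is invariant for the flow of F, and on this plane F restricts to the linear rotation (x₁,x₂) ↦ (−x₂, x₁); in particular the origin is not locally asymptotically stable for ẋ = F(x). -/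
/-! Since `R` has no constant term, `R 0 = 0`, so on the plane `x₃ = 0` the field is the rotation
`(x₁, x₂) ↦ (−x₂, x₁)` with vanishing third component. Hence the circles
`t ↦ (c cos t, c sin t, 0)` are solutions; they start arbitrarily close to the origin but, being
periodic and nonzero, do not converge to it. -/

open Filter Topology Real

theorem Function.Periodic.eq_of_tendsto_atTop {X : Type*} [TopologicalSpace X] [T2Space X]
    {x : ℝ → X} {T : ℝ} (hx : Function.Periodic x T) (hT : 0 < T) {a : X}
    (h : Tendsto x atTop (𝓝 a)) : x 0 = a := by
  have hmul : Tendsto (fun n : ℕ => (n : ℝ) * T) atTop atTop :=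
    tendsto_natCast_atTop_atTop.atTop_mul_const hT
  have hseq : Tendsto (fun n : ℕ => x (n * T)) atTop (𝓝 a) := h.comp hmul
  simp only [hx.nat_mul_eq] at hseq
  exact tendsto_nhds_unique tendsto_const_nhds hseq

theorem sum_Icc_one_mul_zero_pow_two_mul {M : Type*} [Semiring M] (k : ℕ) (d : ℕ → M) :
    ∑ l ∈ Finset.Icc 1 k, d (2 * l) * (0 : M) ^ (2 * l) = 0 :=
  Finset.sum_eq_zero fun l hl => by
    have h2l : 2 * l ≠ 0 := by have := (Finset.mem_Icc.1 hl).1; omega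
    rw [zero_pow h2l, mul_zero]

theorem hasDerivAt_circle (c t : ℝ) :
    HasDerivAt (fun t => (c * cos t, c * sin t, (0 : ℝ))) (-(c * sin t), c * cos t, 0) t := by
  have hcos : HasDerivAt (fun t => c * cos t) (-(c * sin t)) t := by
    simpa using (hasDerivAt_cos t).const_mul c
  exact hcos.prodMk (((hasDerivAt_sin t).const_mul c).prodMk (hasDerivAt_const t 0))

theorem periodic_circle (c : ℝ) :
    Function.Periodic (fun t => (c * cos t, c * sin t, (0 : ℝ))) (2 * π) := by
  intro t
  simp only [cos_add_two_pi, sin_add_two_pi]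

theorem stmt19_general (k : ℕ) (dcoef : ℕ → ℝ)
    (lam a₁ a₂ : ℝ) (f R : ℝ → ℝ)
    (hR : ∀ x : ℝ, R x = ∑ l ∈ Finset.Icc 1 k, dcoef (2*l) * x^(2*l))
    (F : ℝ × ℝ × ℝ → ℝ × ℝ × ℝ)
    (hF : ∀ p : ℝ × ℝ × ℝ, F p =
      (-p.2.1 + R p.2.2 * (lam * p.1 + a₂ * f (a₁*p.1 + a₂*p.2.1)),
       p.1 + R p.2.2 * (lam * p.2.1 - a₁ * f (a₁*p.1 + a₂*p.2.1)),
       -p.2.2 * R p.2.2)) :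
    (∀ x₁ x₂ : ℝ, F (x₁, x₂, 0) = (-x₂, x₁, 0)) ∧
    ¬ ∃ δ : ℝ, 0 < δ ∧ ∀ x : ℝ → ℝ × ℝ × ℝ,
        (∀ t : ℝ, HasDerivAt x (F (x t)) t) → ‖x 0‖ < δ →
        Filter.Tendsto x Filter.atTop (nhds 0) := by
  have hR0 : R 0 = 0 := by rw [hR, sum_Icc_one_mul_zero_pow_two_mul]
  have hplane : ∀ x₁ x₂ : ℝ, F (x₁, x₂, 0) = (-x₂, x₁, 0) := by
    intro x₁ x₂
    simp [hF, hR0]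
  refine ⟨hplane, ?_⟩
  rintro ⟨δ, hδ, hstable⟩
  have hsol : ∀ t, HasDerivAt (fun t => ((δ / 2) * cos t, (δ / 2) * sin t, (0 : ℝ)))
      (F ((δ / 2) * cos t, (δ / 2) * sin t, 0)) t := by
    intro t
    simpa only [hplane] using hasDerivAt_circle (δ / 2) t
  have hsmall : ‖((δ / 2) * cos 0, (δ / 2) * sin 0, (0 : ℝ))‖ < δ := by
    simp [abs_of_pos hδ, hδ]
  have hlim := (periodic_circle (δ / 2)).eq_of_tendsto_atTop two_pi_pos (hstable _ hsol hsmall)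
  have : δ / 2 = 0 := by simpa using congrArg Prod.fst hlim
  linarith

/-- for the three-dimensional vector field
`F(x₁,x₂,x₃) = (−x₂,x₁,−x₃R(x₃)) + R(x₃)(λx₁+a₂f(a₁x₁+a₂x₂), λx₂−a₁f(a₁x₁+a₂x₂), 0)`,
the plane `{x₃ = 0}` is invariant and `F` restricts there to the rotation
`(x₁,x₂) ↦ (−x₂,x₁)`; in particular the origin is not locally asymptotically stable
(there is no `δ > 0` such that every solution starting `δ`-close to `0` converges to `0`). -/
theorem stmt19 (s k : ℕ) (hk : 1 ≤ k) (A dcoef : ℕ → ℝ)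
    (hA : ∀ i ≤ s, A (2*i+1) < 0) (hd : ∀ l, 1 ≤ l → l ≤ k → 0 < dcoef (2*l))
    (lam a₁ a₂ : ℝ) (hlam : lam < 0) (f R : ℝ → ℝ)
    (hf : ∀ t : ℝ, f t = ∑ i ∈ Finset.range (s+1), A (2*i+1) * t^(2*i+1))
    (hR : ∀ x : ℝ, R x = ∑ l ∈ Finset.Icc 1 k, dcoef (2*l) * x^(2*l))
    (F : ℝ × ℝ × ℝ → ℝ × ℝ × ℝ)
    (hF : ∀ p : ℝ × ℝ × ℝ, F p =
      (-p.2.1 + R p.2.2 * (lam * p.1 + a₂ * f (a₁*p.1 + a₂*p.2.1)),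
       p.1 + R p.2.2 * (lam * p.2.1 - a₁ * f (a₁*p.1 + a₂*p.2.1)),
       -p.2.2 * R p.2.2)) :
    (∀ x₁ x₂ : ℝ, F (x₁, x₂, 0) = (-x₂, x₁, 0)) ∧
    ¬ ∃ δ : ℝ, 0 < δ ∧ ∀ x : ℝ → ℝ × ℝ × ℝ,
        (∀ t : ℝ, HasDerivAt x (F (x t)) t) → ‖x 0‖ < δ →
        Filter.Tendsto x Filter.atTop (nhds 0) :=
  stmt19_general k dcoef lam a₁ a₂ f R hR F hF
end
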